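/- arXiv:1212.5149 — 3 statements merged into one kernel-verified Lean document; each statement's English description precedes it below -/
import Mathlib

section
/- Reflection property of the quantum dilogarithm: G_b(x)·G_b(Q − x) = e^{πi x(x−Q)} for every x ∈ ℂ at which both factors are finite (equivalently, as an identity of meromorphic functions on ℂ). -/
noncomputable section

open Complex MeasureTheory Filter Real

/-- The integrand of the contour-integral defining the quantum dilogarithm:
`e^{πtz} / ((e^{πbt}−1)(e^{πb⁻¹t}−1) t)`. -/
def qdIntegrand (b : ℝ) (z t : ℂ) : ℂ :=
  Complex.exp (↑π * t * z) /
    ((Complex.exp (↑π * ↑b * t) - 1) * (Complex.exp (↑π * (↑b)⁻¹ * t) - 1) * t)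

/-- Radius of the small semicircle above `t = 0` (any sufficiently small radius
gives the same value; we fix one symmetric in `b ↔ b⁻¹`). -/
def qdRadius (b : ℝ) : ℝ := min b b⁻¹ / 2

/-- The contour integral `∫_Ω e^{πtz}/((e^{πbt}−1)(e^{πb⁻¹t}−1)) dt/t`, where
the contour `Ω` runs along `ℝ` from `−∞` to `+∞`, deformed by a small semicircle
passing above the singularity at `t = 0`. -/
def qdContour (b : ℝ) (z : ℂ) : ℂ :=
  (∫ t in Set.Iic (-(qdRadius b)), qdIntegrand b z (t : ℂ)) +
  (∫ t in Set.Ici (qdRadius b), qdIntegrand b z (t : ℂ)) -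
  Complex.I * ∫ θ in (0:ℝ)..π,
    qdIntegrand b z ((qdRadius b : ℂ) * Complex.exp (Complex.I * (θ : ℝ))) *
      ((qdRadius b : ℂ) * Complex.exp (Complex.I * (θ : ℝ)))

/-- `ζ_b = exp((πi/2)((b² + b^{-2})/6 + 1/2))`. -/
def zetab (b : ℝ) : ℂ :=
  Complex.exp (↑π * Complex.I / 2 * (((b : ℂ)^2 + ((b : ℂ)⁻¹)^2) / 6 + 1 / 2))

/-- `Q = b + b⁻¹`. -/
def Qb (b : ℝ) : ℝ := b + b⁻¹

/-- The quantum dilogarithm on the strip `0 < Re z < Q`: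
`G_b(z) = conj(ζ_b) · exp(−∫_Ω …)`. -/
def Gstrip (b : ℝ) (z : ℂ) : ℂ :=
  (starRingEnd ℂ) (zetab b) * Complex.exp (-qdContour b z)

/-- `G : ℂ → ℂ` is (a representative of) the meromorphic continuation of the
quantum dilogarithm `G_b`: it is meromorphic on all of `ℂ`, analytic away from
the lattice `{−nb − mb⁻¹ : n, m ∈ ℤ≥0}` of poles, and agrees with the
contour-integral formula on the strip `0 < Re z < Q`. -/
def IsGb (b : ℝ) (G : ℂ → ℂ) : Prop :=
  (∀ z : ℂ, MeromorphicAt G z) ∧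
  (∀ z : ℂ, (∀ n m : ℕ, z ≠ -(n : ℂ) * (b : ℂ) - (m : ℂ) * ((b : ℂ))⁻¹) →
    AnalyticAt ℂ G z) ∧
  (∀ z : ℂ, 0 < z.re → z.re < Qb b → G z = Gstrip b z)

open scoped Topology

/-!
For the contour formula, `Gstrip b z * Gstrip b (Q - z) = conj(ζ_b)² · exp(-(Φ(z) + Φ(Q - z)))`,
`Φ` being the contour integral. Its integrand satisfies `I(Q - z, -t) = -I(z, t)`, so in
`Φ(z) + Φ(Q - z)` the rays cancel, and the small semicircle for `Q - z`, reflected through `0`,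
completes the one for `z` to a clockwise circle around the triple pole `t = 0`. Since
`e^w - 1 = w · dslope exp 0 w`, the residue there is half the second derivative at `0` of an explicit
holomorphic function, and `Φ(z) + Φ(Q - z) = -πi (z² - Qz + (b² + b⁻²)/6 + 1/2)`; the constant term
is cancelled by `conj(ζ_b)²`. Finally `G x * G (Q - x)` is holomorphic off a countable set, whose
complement is connected and dense, so the identity theorem carries the formula from the strip to
every point where both factors are analytic.
-/

theorem differentiable_dslope {f : ℂ → ℂ} (hf : Differentiable ℂ f) (a : ℂ) :
    Differentiable ℂ (dslope f a) := fun _ =>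
  ((Complex.differentiableOn_dslope univ_mem).mpr hf.differentiableOn).differentiableAt
    univ_mem

theorem iteratedDeriv_dslope_zero {f : ℂ → ℂ} (hf : Differentiable ℂ f) (k : ℕ) :
    iteratedDeriv k (dslope f 0) 0 = iteratedDeriv (k + 1) f 0 / (k + 1) := by
  have hslope : (fun t => t * dslope f 0 t) = fun t => f t - f 0 := by
    funext t; simpa using sub_smul_dslope f 0 t
  have h := congrArg (fun g => iteratedDeriv (k + 1) g 0) hslope
  rw [iteratedDeriv_fun_mul contDiffAt_fun_id ((differentiable_dslope hf 0).contDiff.contDiffAt),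
    iteratedDeriv_fun_sub hf.contDiff.contDiffAt contDiffAt_const,
    Finset.sum_eq_single 1 (by intro i _ hi; simp [iteratedDeriv_fun_id_zero, hi]) (by simp),
    iteratedDeriv_const, if_neg k.succ_ne_zero, sub_zero] at h
  rw [eq_div_iff (Nat.cast_add_one_ne_zero k), ← h]
  simp [iteratedDeriv_fun_id_zero, mul_comm]

theorem iteratedDeriv_dslope_cexp_comp_mul (a : ℂ) (k : ℕ) :
    iteratedDeriv k (fun t => dslope cexp 0 (a * t)) 0 = a ^ k / (k + 1) := by
  rw [iteratedDeriv_comp_const_mul (differentiable_dslope differentiable_exp 0).contDiff]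
  beta_reduce
  rw [mul_zero, iteratedDeriv_dslope_zero differentiable_exp, iteratedDeriv_eq_iterate,
    Complex.iter_deriv_exp, Complex.exp_zero, mul_one_div]

theorem dslope_cexp_zero_ne_zero {w : ℂ} (hw : ‖w‖ < 2 * π) : dslope cexp 0 w ≠ 0 := by
  rcases eq_or_ne w 0 with rfl | hw0
  · simp [dslope_same]
  rw [dslope_of_ne _ hw0, slope_def_field, sub_zero, Complex.exp_zero]
  refine div_ne_zero (sub_ne_zero.mpr fun h1 => ?_) hw0
  obtain ⟨n, rfl⟩ := exp_eq_one_iff.mp h1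
  have hn : (1 : ℝ) ≤ |(n : ℝ)| := by
    exact_mod_cast Int.one_le_abs fun hn => hw0 (by simp [hn])
  simp only [norm_mul, norm_intCast, Complex.norm_ofNat, norm_real, norm_eq_abs,
    abs_of_pos pi_pos, norm_I, mul_one] at hw
  nlinarith [pi_pos]

def expKernel (a a' c t : ℂ) : ℂ :=
  cexp (c * t) / ((cexp (a * t) - 1) * (cexp (a' * t) - 1) * t)

def expKernelRegular (a a' c t : ℂ) : ℂ :=
  cexp (c * t) / (dslope cexp 0 (a * t) * dslope cexp 0 (a' * t))

-- Both sides vanish at `t = 0`; the right side has the shape of the Cauchy integral formula.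
theorem expKernel_eq_smul_expKernelRegular (a a' c t : ℂ) :
    expKernel a a' c t = (a * a')⁻¹ * ((1 / (t - 0) ^ (2 + 1)) • expKernelRegular a a' c t) := by
  have hslope (a : ℂ) : cexp (a * t) - 1 = a * t * dslope cexp 0 (a * t) := by
    simpa using (sub_smul_dslope cexp 0 (a * t)).symm
  rw [expKernel, expKernelRegular, hslope, hslope, smul_eq_mul]
  field_simp
  ring

theorem expKernel_neg (a a' c t : ℂ) :
    expKernel a a' (a + a' - c) (-t) = -expKernel a a' c t := by
  have hA := Complex.exp_ne_zero (a * t)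
  have hB := Complex.exp_ne_zero (a' * t)
  have hnum : cexp ((a + a' - c) * -t) = (cexp (a * t) * cexp (a' * t))⁻¹ * cexp (c * t) := by
    rw [← Complex.exp_add, ← Complex.exp_neg, ← Complex.exp_add]
    ring_nf
  have hden : (cexp (a * -t) - 1) * (cexp (a' * -t) - 1) * -t
      = (cexp (a * t) * cexp (a' * t))⁻¹ * -((cexp (a * t) - 1) * (cexp (a' * t) - 1) * t) := by
    simp only [mul_neg, Complex.exp_neg]
    field_simp
    ring
  rw [expKernel, expKernel, hnum, hden, mul_div_mul_left _ _ (inv_ne_zero (mul_ne_zero hA hB)),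
    div_neg]

theorem iteratedDeriv_two_expKernelRegular (a a' c : ℂ) :
    iteratedDeriv 2 (expKernelRegular a a' c) 0
      = c ^ 2 - (a + a') * c + (a ^ 2 + a' ^ 2) / 6 + a * a' / 2 := by
  set F := expKernelRegular a a' c
  have hφ (a : ℂ) (n : ℕ) : ContDiff ℂ n fun t => dslope cexp 0 (a * t) :=
    (differentiable_dslope differentiable_exp 0).contDiff.comp (contDiff_const.mul contDiff_id)
  set W : ℂ → ℂ := fun t => dslope cexp 0 (a * t) * dslope cexp 0 (a' * t)
  have hWsmooth (n : ℕ) : ContDiff ℂ n W := (hφ a n).mul (hφ a' n)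
  have hW (k : ℕ) : iteratedDeriv k W 0 = ∑ i ∈ Finset.range (k + 1),
      k.choose i * (a ^ i / (i + 1)) * (a' ^ (k - i) / ((k - i : ℕ) + 1)) := by
    rw [iteratedDeriv_fun_mul (hφ a k).contDiffAt (hφ a' k).contDiffAt]
    simp only [iteratedDeriv_dslope_cexp_comp_mul]
  have hW0 : W 0 = 1 := by simpa using hW 0
  have hW0_ne : W 0 ≠ 0 := by rw [hW0]; exact one_ne_zero
  have hF : ContDiffAt ℂ 2 F 0 :=
    (Complex.contDiff_exp.comp (contDiff_const.mul contDiff_id)).contDiffAt.div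
      (hWsmooth 2).contDiffAt hW0_ne
  have hFW : (fun t => F t * W t) =ᶠ[𝓝 0] fun t => cexp (c * t) := by
    filter_upwards [(hWsmooth 0).continuous.continuousAt.eventually_ne hW0_ne] with t ht
    exact div_mul_cancel₀ _ ht
  have hleibniz (k : ℕ) (hk : k ≤ 2) : ∑ i ∈ Finset.range (k + 1),
      k.choose i * iteratedDeriv i F 0 * iteratedDeriv (k - i) W 0 = c ^ k := by
    rw [← iteratedDeriv_fun_mul (hF.of_le (by exact_mod_cast hk)) (hWsmooth k).contDiffAt,
      hFW.iteratedDeriv_eq]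
    simp
  have e0 := hleibniz 0 (by norm_num)
  have e1 := hleibniz 1 (by norm_num)
  have e2 := hleibniz 2 (by norm_num)
  norm_num [Finset.sum_range_succ, hW, hW0] at e0 e1 e2
  linear_combination e2 - (a + a') * e1
    + ((a + a') ^ 2 / 2 - (a ^ 2 + a' ^ 2) / 3 - a * a' / 2) * e0

theorem differentiableOn_expKernelRegular (a a' c : ℂ) {r : ℝ} (har : ‖a‖ * r < 2 * π)
    (ha'r : ‖a'‖ * r < 2 * π) :
    DifferentiableOn ℂ (expKernelRegular a a' c) (Metric.closedBall 0 r) := by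
  intro t ht
  rw [Metric.mem_closedBall, dist_zero_right] at ht
  have hne (a : ℂ) (har : ‖a‖ * r < 2 * π) : dslope cexp 0 (a * t) ≠ 0 := by
    refine dslope_cexp_zero_ne_zero ?_
    rw [norm_mul]
    nlinarith [norm_nonneg a]
  have hφ := differentiable_dslope differentiable_exp 0
  refine DifferentiableAt.differentiableWithinAt (f := fun t =>
    cexp (c * t) / (dslope cexp 0 (a * t) * dslope cexp 0 (a' * t))) ?_
  exact .div (by fun_prop) (by fun_prop) (mul_ne_zero (hne a har) (hne a' ha'r))

theorem circleIntegrable_expKernel (a a' c : ℂ) {r : ℝ} (hr : 0 < r)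
    (har : ‖a‖ * r < 2 * π) (ha'r : ‖a'‖ * r < 2 * π) :
    CircleIntegrable (expKernel a a' c) 0 r := by
  have hpow : ContinuousOn (fun t : ℂ => 1 / (t - 0) ^ (2 + 1)) (Metric.sphere 0 r) := by
    refine continuousOn_const.div (by fun_prop) fun t ht => pow_ne_zero _ (sub_ne_zero.mpr ?_)
    rintro rfl
    simp [hr.ne] at ht
  rw [show expKernel a a' c = _ from funext (expKernel_eq_smul_expKernelRegular a a' c)]
  exact (continuousOn_const.mul (hpow.smul ((differentiableOn_expKernelRegular a a' c har
    ha'r).continuousOn.mono Metric.sphere_subset_closedBall))).circleIntegrable hr.le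

theorem circleIntegral_expKernel (a a' c : ℂ) {r : ℝ} (hr : 0 < r)
    (har : ‖a‖ * r < 2 * π) (ha'r : ‖a'‖ * r < 2 * π) :
    (∮ t in C(0, r), expKernel a a' c t)
      = π * I / (a * a') * (c ^ 2 - (a + a') * c + (a ^ 2 + a' ^ 2) / 6 + a * a' / 2) := by
  simp_rw [expKernel_eq_smul_expKernelRegular]
  rw [circleIntegral.integral_const_mul, (differentiableOn_expKernelRegular a a' c har
    ha'r).circleIntegral_one_div_sub_center_pow_smul hr, iteratedDeriv_two_expKernelRegular,
    smul_eq_mul, Nat.factorial_two]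
  push_cast
  ring

theorem circleMap_zero_add_pi (R θ : ℝ) : circleMap 0 R (θ + π) = -circleMap 0 R θ := by
  simp [circleMap_zero, add_mul, Complex.exp_add]

theorem circleIntegral_zero_eq_semicircle_sub {f : ℂ → ℂ} {R : ℝ} (hf : CircleIntegrable f 0 R) :
    (∮ z in C(0, R), f z) = I * (∫ θ in 0..π, f (circleMap 0 R θ) * circleMap 0 R θ)
      - I * ∫ θ in 0..π, f (-circleMap 0 R θ) * circleMap 0 R θ := by
  have hπ : π ∈ Set.uIcc 0 (2 * π) := by
    rw [Set.uIcc_of_le (by positivity)]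
    constructor <;> linarith [pi_pos]
  have hshift : ∫ θ in π..2 * π, deriv (circleMap 0 R) θ • f (circleMap 0 R θ)
      = ∫ θ in 0..π, deriv (circleMap 0 R) (θ + π) • f (circleMap 0 R (θ + π)) := by
    rw [intervalIntegral.integral_comp_add_right
      (fun θ => deriv (circleMap 0 R) θ • f (circleMap 0 R θ))]
    ring_nf
  rw [circleIntegral, ← intervalIntegral.integral_add_adjacent_intervals (b := π)
    (hf.out.mono_set (Set.uIcc_subset_uIcc_left hπ))
    (hf.out.mono_set (Set.uIcc_subset_uIcc_right hπ)), hshift]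
  simp only [deriv_circleMap, circleMap_zero_add_pi, smul_eq_mul]
  rw [← intervalIntegral.integral_const_mul, ← intervalIntegral.integral_const_mul, sub_eq_add_neg,
    ← intervalIntegral.integral_neg]
  congr 1 <;> congr 1 <;> ext θ <;> ring

theorem Qb_pos {b : ℝ} (hb : 0 < b) : 0 < Qb b := by
  unfold Qb; positivity

theorem qdRadius_pos {b : ℝ} (hb : 0 < b) : 0 < qdRadius b := by
  unfold qdRadius; positivity

theorem norm_pi_mul_mul_qdRadius_lt {b : ℝ} (hb : 0 < b) :
    ‖(π : ℂ) * b‖ * qdRadius b < 2 * π := by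
  have h := mul_le_mul_of_nonneg_left (min_le_right b b⁻¹) hb.le
  rw [mul_inv_cancel₀ hb.ne'] at h
  rw [norm_mul, norm_real, norm_real, Real.norm_of_nonneg pi_pos.le, Real.norm_of_nonneg hb.le,
    mul_assoc, qdRadius]
  nlinarith [pi_pos]

theorem norm_pi_mul_inv_mul_qdRadius_lt {b : ℝ} (hb : 0 < b) :
    ‖(π : ℂ) * (b : ℂ)⁻¹‖ * qdRadius b < 2 * π := by
  have h := mul_le_mul_of_nonneg_left (min_le_left b b⁻¹) (inv_pos.mpr hb).le
  rw [inv_mul_cancel₀ hb.ne'] at h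
  rw [norm_mul, norm_inv, norm_real, norm_real, Real.norm_of_nonneg pi_pos.le,
    Real.norm_of_nonneg hb.le, mul_assoc, qdRadius]
  nlinarith [pi_pos]

theorem qdIntegrand_eq_expKernel (b : ℝ) (z t : ℂ) :
    qdIntegrand b z t = expKernel (π * b) (π * (b : ℂ)⁻¹) (π * z) t := by
  rw [qdIntegrand, expKernel, mul_right_comm (π : ℂ) t z]

theorem qdIntegrand_Qb_sub_neg (b : ℝ) (z t : ℂ) :
    qdIntegrand b (Qb b - z) (-t) = -qdIntegrand b z t := by
  have hQ : (π : ℂ) * (Qb b - z) = π * b + π * (b : ℂ)⁻¹ - π * z := by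
    simp only [Qb]; push_cast; ring
  rw [qdIntegrand_eq_expKernel, qdIntegrand_eq_expKernel, hQ, expKernel_neg]

theorem circleIntegrable_qdIntegrand {b : ℝ} (hb : 0 < b) (z : ℂ) :
    CircleIntegrable (qdIntegrand b z) 0 (qdRadius b) := by
  rw [show qdIntegrand b z = _ from funext (qdIntegrand_eq_expKernel b z)]
  exact circleIntegrable_expKernel _ _ _ (qdRadius_pos hb) (norm_pi_mul_mul_qdRadius_lt hb)
    (norm_pi_mul_inv_mul_qdRadius_lt hb)

theorem circleIntegral_qdIntegrand {b : ℝ} (hb : 0 < b) (z : ℂ) :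
    (∮ t in C(0, qdRadius b), qdIntegrand b z t)
      = π * I * (z ^ 2 - Qb b * z + ((b : ℂ) ^ 2 + (b : ℂ)⁻¹ ^ 2) / 6 + 1 / 2) := by
  simp_rw [qdIntegrand_eq_expKernel]
  rw [circleIntegral_expKernel _ _ _ (qdRadius_pos hb) (norm_pi_mul_mul_qdRadius_lt hb)
    (norm_pi_mul_inv_mul_qdRadius_lt hb), Qb]
  have : (b : ℂ) ≠ 0 := ofReal_ne_zero.mpr hb.ne'
  have : (π : ℂ) ≠ 0 := ofReal_ne_zero.mpr pi_ne_zero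
  push_cast
  field_simp

theorem qdContour_add_qdContour_Qb_sub {b : ℝ} (hb : 0 < b) (z : ℂ) :
    qdContour b z + qdContour b (Qb b - z) = -∮ t in C(0, qdRadius b), qdIntegrand b z t := by
  have hsemi (w : ℂ) : (∫ θ in (0:ℝ)..π,
      qdIntegrand b w ((qdRadius b : ℂ) * cexp (I * (θ : ℝ))) *
        ((qdRadius b : ℂ) * cexp (I * (θ : ℝ))))
      = ∫ θ in (0:ℝ)..π,
          qdIntegrand b w (circleMap 0 (qdRadius b) θ) * circleMap 0 (qdRadius b) θ := by
    simp only [circleMap_zero, mul_comm I]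
  have hodd (t : ℝ) : qdIntegrand b (Qb b - z) t = -qdIntegrand b z ((-t : ℝ) : ℂ) := by
    simpa using qdIntegrand_Qb_sub_neg b z (-t)
  have hIic : ∫ t in Set.Iic (-qdRadius b), qdIntegrand b (Qb b - z) (t : ℂ)
      = -∫ t in Set.Ici (qdRadius b), qdIntegrand b z (t : ℂ) := by
    simp only [hodd, integral_neg, integral_comp_neg_Iic (f := fun t : ℝ => qdIntegrand b z t),
      neg_neg, integral_Ici_eq_integral_Ioi]
  have hIci : ∫ t in Set.Ici (qdRadius b), qdIntegrand b (Qb b - z) (t : ℂ)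
      = -∫ t in Set.Iic (-qdRadius b), qdIntegrand b z (t : ℂ) := by
    simp only [hodd, integral_neg, integral_Ici_eq_integral_Ioi,
      integral_comp_neg_Ioi (f := fun t : ℝ => qdIntegrand b z t)]
  have hneg (t : ℂ) : qdIntegrand b z (-t) = -qdIntegrand b (Qb b - z) t := by
    simpa using qdIntegrand_Qb_sub_neg b (Qb b - z) t
  rw [circleIntegral_zero_eq_semicircle_sub (circleIntegrable_qdIntegrand hb z), qdContour,
    qdContour, hsemi, hsemi, hIic, hIci]
  simp only [hneg, neg_mul, intervalIntegral.integral_neg]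
  ring

theorem Gstrip_mul_Gstrip_Qb_sub {b : ℝ} (hb : 0 < b) (z : ℂ) :
    Gstrip b z * Gstrip b (Qb b - z) = cexp (π * I * z * (z - Qb b)) := by
  have hconj : (starRingEnd ℂ) (zetab b)
      = cexp (-(π * I / 2 * (((b : ℂ) ^ 2 + (b : ℂ)⁻¹ ^ 2) / 6 + 1 / 2))) := by
    rw [zetab, ← Complex.exp_conj]
    congr 1
    simp only [map_div₀, map_add, map_mul, map_pow, map_inv₀, map_ofNat, conj_ofReal, conj_I,
      map_one]
    ring
  rw [Gstrip, Gstrip, hconj, mul_mul_mul_comm, ← Complex.exp_add, ← Complex.exp_add,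
    ← Complex.exp_add]
  congr 1
  linear_combination -qdContour_add_qdContour_Qb_sub hb z + circleIntegral_qdIntegrand hb z

def qdPoles (b : ℝ) : Set ℂ :=
  Set.range fun p : ℕ × ℕ => -(p.1 : ℂ) * b - p.2 * (b : ℂ)⁻¹

theorem re_nonpos_of_mem_qdPoles {b : ℝ} (hb : 0 < b) {z : ℂ} (hz : z ∈ qdPoles b) :
    z.re ≤ 0 := by
  obtain ⟨⟨n, m⟩, rfl⟩ := hz
  have hn : 0 ≤ (n : ℝ) * b := by positivity
  have hm : 0 ≤ (m : ℝ) * b⁻¹ := by positivity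
  norm_num
  linarith

theorem IsGb.analyticAt {b : ℝ} {G : ℂ → ℂ} (hG : IsGb b G) {z : ℂ} (hz : z ∉ qdPoles b) :
    AnalyticAt ℂ G z :=
  hG.2.1 z fun n m h => hz ⟨(n, m), h.symm⟩

theorem IsGb.mul_Qb_sub_eventuallyEq {b : ℝ} (hb : 0 < b) {G : ℂ → ℂ} (hG : IsGb b G) :
    (fun w => G w * G (Qb b - w)) =ᶠ[𝓝 ((Qb b : ℂ) / 2)]
      fun w => cexp (π * I * w * (w - Qb b)) := by
  have hQ := Qb_pos hb
  have hstrip : Complex.re ⁻¹' Set.Ioo 0 (Qb b) ∈ 𝓝 ((Qb b : ℂ) / 2) :=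
    continuous_re.continuousAt.preimage_mem_nhds
      (Ioo_mem_nhds (by simpa using hQ) (by simpa using hQ))
  filter_upwards [hstrip] with w ⟨hw0, hwQ⟩
  rw [hG.2.2 w hw0 hwQ, hG.2.2 _ (by simpa using hwQ) (by simpa using hw0),
    Gstrip_mul_Gstrip_Qb_sub hb]

theorem eq_of_continuousAt_of_eqOn_dense {X Y : Type*} [TopologicalSpace X] [TopologicalSpace Y]
    [T2Space Y] {f g : X → Y} {s : Set X} (hs : Dense s) (hfg : Set.EqOn f g s) {x : X}
    (hf : ContinuousAt f x) (hg : ContinuousAt g x) : f x = g x := by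
  have : (𝓝[s] x).NeBot := mem_closure_iff_nhdsWithin_neBot.mp (hs x)
  exact tendsto_nhds_unique
    (hf.continuousWithinAt.tendsto.congr' (eventually_nhdsWithin_of_forall hfg))
    hg.continuousWithinAt.tendsto

theorem AnalyticOnNhd.eqOn_compl_of_countable {E : Type*} [NormedAddCommGroup E]
    [NormedSpace ℂ E] {f g : ℂ → E} {T : Set ℂ} (hT : T.Countable)
    (hf : AnalyticOnNhd ℂ f Tᶜ) (hg : AnalyticOnNhd ℂ g Tᶜ) {z₀ : ℂ} (hz₀ : z₀ ∉ T)
    (hfg : f =ᶠ[𝓝 z₀] g) : Set.EqOn f g Tᶜ :=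
  hf.eqOn_of_preconnected_of_eventuallyEq hg
    (hT.isPathConnected_compl_of_one_lt_rank (by simp)).isConnected.isPreconnected hz₀ hfg

theorem Gb_reflection_general (b : ℝ) (hb0 : 0 < b) (G : ℂ → ℂ) (hG : IsGb b G) :
    ∀ x : ℂ, AnalyticAt ℂ G x → AnalyticAt ℂ G ((Qb b : ℂ) - x) →
      G x * G ((Qb b : ℂ) - x) = Complex.exp (↑π * Complex.I * x * (x - (Qb b : ℂ))) := by
  intro x hx hQx
  set T := qdPoles b ∪ (fun w => (Qb b : ℂ) - w) ⁻¹' qdPoles b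
  have hT : T.Countable :=
    (Set.countable_range _).union ((Set.countable_range _).preimage sub_right_injective)
  have hprod : AnalyticOnNhd ℂ (fun w => G w * G (Qb b - w)) Tᶜ := fun w hw => by
    simp only [T, Set.mem_compl_iff, Set.mem_union, Set.mem_preimage, not_or] at hw
    exact (hG.analyticAt hw.1).mul ((hG.analyticAt hw.2).comp (by fun_prop))
  have hexp : AnalyticOnNhd ℂ (fun w => cexp (π * I * w * (w - Qb b))) Tᶜ := fun _ _ => by
    fun_prop
  have hcentre : (Qb b : ℂ) / 2 ∉ T := by
    have hre : ((Qb b : ℂ) / 2).re = Qb b / 2 := by simp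
    rintro (h | h)
    · linarith [re_nonpos_of_mem_qdPoles hb0 h, Qb_pos hb0]
    · rw [Set.mem_preimage, sub_half] at h
      linarith [re_nonpos_of_mem_qdPoles hb0 h, Qb_pos hb0]
  refine eq_of_continuousAt_of_eqOn_dense (hT.dense_compl ℝ)
    (hprod.eqOn_compl_of_countable hT hexp hcentre (hG.mul_Qb_sub_eventuallyEq hb0)) ?_ ?_
  · exact (hx.mul (hQx.comp (by fun_prop))).continuousAt
  · fun_prop

/-- Reflection property of the quantum dilogarithm:
`G_b(x)·G_b(Q − x) = e^{πix(x−Q)}` at every point where both factors are finite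
(i.e. where `G` is analytic at both `x` and `Q − x`). -/
theorem Gb_reflection (b : ℝ) (hb0 : 0 < b) (hb1 : b < 1)
    (hirr : Irrational (b ^ 2)) (G : ℂ → ℂ) (hG : IsGb b G) :
    ∀ x : ℂ, AnalyticAt ℂ G x → AnalyticAt ℂ G ((Qb b : ℂ) - x) →
      G x * G ((Qb b : ℂ) - x) = Complex.exp (↑π * Complex.I * x * (x - (Qb b : ℂ))) :=
  Gb_reflection_general b hb0 G hG

end
end

section
/- Algebraic core of the non-simply-laced generalized pentagon relation (Proposition 3.2): let A be a unital associative ℂ-algebra, q ∈ ℂ invertible, and U, V, c, d ∈ A elements satisfying UV − VU = (q − q^{-1})·c, V·c = q^{-2}·c·V − q^{-1}(q² − q^{-2})·d (equivalently d = (q^{-1}cV − qVc)/(q² − q^{-2})), and V·d = q^{-4}·d·V. Then for every integer n ≥ 2, Vⁿ·U = U·Vⁿ − q(1 − q^{-2n})·c·V^{n−1} + q²(1 − q^{-2n})(1 − q^{2−2n})·d·V^{n−2}. -/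
/-!
Left multiplication by `V` pushes `V` through `U`, `c` and `d` by the three commutation
relations, which form a triangular system: `V` past `U` creates a `c`, `V` past `c` creates a `d`,
and `V` past `d` only rescales. Hence `Vⁿ U = U Vⁿ - aₙ c Vⁿ⁻¹ + bₙ d Vⁿ⁻²` with coefficients obeying
the first-order recurrences `aₙ₊₁ = α + β aₙ`, `bₙ₊₁ = γ aₙ + δ bₙ`, and for the `q`-dependent
values of `α, β, γ, δ` these recurrences are solved by the stated closed forms, both of which vanish
at `n = 0`.
-/

section CommutationRecurrence

variable {R A : Type*} [CommRing R] [Ring A] [Algebra R A] {α β γ δ : R} {U V c d : A}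

theorem pow_add_two_mul_eq_of_recurrence
    (hU : V * U = U * V - α • c) (hc : V * c = β • (c * V) - γ • d) (hd : V * d = δ • (d * V))
    {a b : ℕ → R} (ha₀ : a 0 = 0) (hb₀ : b 0 = 0)
    (ha : ∀ n, a (n + 1) = α + β * a n) (hb : ∀ n, b (n + 1) = γ * a n + δ * b n) (n : ℕ) :
    V ^ (n + 2) * U =
      U * V ^ (n + 2) - a (n + 2) • (c * V ^ (n + 1)) + b (n + 2) • (d * V ^ n) := by
  induction n with
  | zero =>
    have h₂ : V ^ 2 * U = U * V ^ 2 - (α + β * α) • (c * V) + (γ * α) • d := by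
      rw [sq, mul_assoc, hU, mul_sub, ← mul_assoc, hU, mul_smul_comm, hc]
      simp only [sub_mul, smul_mul_assoc, mul_assoc]
      match_scalars <;> ring
    simpa only [ha, hb, ha₀, hb₀, zero_add, pow_one, pow_zero, mul_one, mul_zero, add_zero]
      using h₂
  | succ n ih =>
    calc V ^ (n + 3) * U = V * (V ^ (n + 2) * U) := by rw [pow_succ', mul_assoc]
      _ = (V * U) * V ^ (n + 2) - a (n + 2) • ((V * c) * V ^ (n + 1))
          + b (n + 2) • ((V * d) * V ^ n) := by
        rw [ih, mul_add, mul_sub, mul_smul_comm, mul_smul_comm]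
        simp only [mul_assoc]
      _ = _ := by
        rw [hU, hc, hd, ha (n + 2), hb (n + 2)]
        simp only [sub_mul, smul_mul_assoc, mul_assoc, ← pow_succ']
        match_scalars <;> ring

end CommutationRecurrence

section PentagonCoefficients

variable {K : Type*} [Field K]

def pentagonCoeffC (q : K) (n : ℕ) : K := q * (1 - q ^ (-(2 * (n : ℤ))))

def pentagonCoeffD (q : K) (n : ℕ) : K :=
  q ^ (2 : ℤ) * (1 - q ^ (-(2 * (n : ℤ)))) * (1 - q ^ ((2 : ℤ) - 2 * (n : ℤ)))

theorem pentagonCoeffC_zero (q : K) : pentagonCoeffC q 0 = 0 := by simp [pentagonCoeffC]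

theorem pentagonCoeffD_zero (q : K) : pentagonCoeffD q 0 = 0 := by simp [pentagonCoeffD]

variable {q : K}

theorem zpow_neg_two_mul_natCast_succ (hq : q ≠ 0) (n : ℕ) :
    q ^ (-(2 * ((n + 1 : ℕ) : ℤ))) = q ^ (-(2 * (n : ℤ))) * (q ^ 2)⁻¹ := by
  rw [← zpow_ofNat, ← zpow_neg, ← zpow_add₀ hq]
  push_cast
  ring_nf

theorem pentagonCoeffC_succ (hq : q ≠ 0) (n : ℕ) :
    pentagonCoeffC q (n + 1) = (q - q⁻¹) + q ^ (-2 : ℤ) * pentagonCoeffC q n := by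
  rw [pentagonCoeffC, pentagonCoeffC, zpow_neg_two_mul_natCast_succ hq]
  field_simp
  ring

theorem pentagonCoeffD_succ (hq : q ≠ 0) (n : ℕ) :
    pentagonCoeffD q (n + 1) = (q⁻¹ * (q ^ (2 : ℤ) - q ^ (-2 : ℤ))) * pentagonCoeffC q n
      + q ^ (-4 : ℤ) * pentagonCoeffD q n := by
  have h₁ : q ^ ((2 : ℤ) - 2 * ((n + 1 : ℕ) : ℤ)) = q ^ (-(2 * (n : ℤ))) := by
    push_cast
    ring_nf
  have h₂ : q ^ ((2 : ℤ) - 2 * (n : ℤ)) = q ^ 2 * q ^ (-(2 * (n : ℤ))) := by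
    rw [← zpow_ofNat, ← zpow_add₀ hq]
    ring_nf
  rw [pentagonCoeffD, pentagonCoeffD, pentagonCoeffC, h₁, h₂, zpow_neg_two_mul_natCast_succ hq]
  field_simp
  ring

end PentagonCoefficients

theorem generalized_pentagon_core_nsl_general (A : Type*) [Ring A] [Algebra ℂ A]
    (q : ℂ) (hq : q ≠ 0)
    (U V c d : A)
    (h1 : U * V - V * U = (q - q⁻¹) • c)
    (h2 : V * c = (q ^ (-2 : ℤ)) • (c * V) - (q⁻¹ * (q ^ (2 : ℤ) - q ^ (-2 : ℤ))) • d)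
    (h3 : V * d = (q ^ (-4 : ℤ)) • (d * V)) :
    ∀ n : ℕ, 2 ≤ n →
      V ^ n * U = U * V ^ n - (q * (1 - q ^ (-(2 * (n : ℤ))))) • (c * V ^ (n - 1)) +
        (q ^ (2 : ℤ) * (1 - q ^ (-(2 * (n : ℤ)))) * (1 - q ^ ((2 : ℤ) - 2 * (n : ℤ)))) •
          (d * V ^ (n - 2)) := by
  intro n hn
  obtain ⟨m, rfl⟩ := Nat.exists_eq_add_of_le' hn
  rw [show m + 2 - 1 = m + 1 by omega, Nat.add_sub_cancel]
  have hVU : V * U = U * V - (q - q⁻¹) • c := by rw [← h1, sub_sub_cancel]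
  exact pow_add_two_mul_eq_of_recurrence hVU h2 h3 (pentagonCoeffC_zero q) (pentagonCoeffD_zero q)
    (pentagonCoeffC_succ hq) (pentagonCoeffD_succ hq) m

/-- Algebraic core of the non-simply-laced generalized pentagon
relation (Proposition 3.2): let `A` be a unital associative ℂ-algebra, `q ∈ ℂ`
invertible with `q² − q⁻² ≠ 0`, and `U, V, c, d ∈ A` elements satisfying
`UV − VU = (q − q⁻¹)·c`, `V·c = q⁻²·c·V − q⁻¹(q² − q⁻²)·d`
(equivalently `d = (q⁻¹cV − qVc)/(q² − q⁻²)`), and `V·d = q⁻⁴·d·V`.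
Then for every integer `n ≥ 2`,
`Vⁿ·U = U·Vⁿ − q(1 − q^{−2n})·c·V^{n−1} + q²(1 − q^{−2n})(1 − q^{2−2n})·d·V^{n−2}`. -/
theorem generalized_pentagon_core_nsl (A : Type*) [Ring A] [Algebra ℂ A]
    (q : ℂ) (hq : q ≠ 0) (hq2 : q ^ (2 : ℤ) - q ^ (-2 : ℤ) ≠ 0)
    (U V c d : A)
    (h1 : U * V - V * U = (q - q⁻¹) • c)
    (h2 : V * c = (q ^ (-2 : ℤ)) • (c * V) - (q⁻¹ * (q ^ (2 : ℤ) - q ^ (-2 : ℤ))) • d)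
    (h3 : V * d = (q ^ (-4 : ℤ)) • (d * V)) :
    ∀ n : ℕ, 2 ≤ n →
      V ^ n * U = U * V ^ n - (q * (1 - q ^ (-(2 * (n : ℤ))))) • (c * V ^ (n - 1)) +
        (q ^ (2 : ℤ) * (1 - q ^ (-(2 * (n : ℤ)))) * (1 - q ^ ((2 : ℤ) - 2 * (n : ℤ)))) •
          (d * V ^ (n - 2)) :=
  generalized_pentagon_core_nsl_general A q hq U V c d h1 h2 h3
end

section
/- Mirror form of the algebraic core of the non-simply-laced generalized pentagon relation (Proposition 3.2): let A be a unital associative ℂ-algebra, q ∈ ℂ invertible, and U, V, c, d' ∈ A elements satisfying UV − VU = (q − q^{-1})·c, U·c = q²·c·U + q(q² − q^{-2})·d' (equivalently d' = (q^{-1}Uc − qcU)/(q² − q^{-2})), and U·d' = q⁴·d'·U. Then for every integer n ≥ 2, Uⁿ·V = V·Uⁿ + q^{-1}(q^{2n} − 1)·c·U^{n−1} + q^{-2}(q^{2n} − 1)(q^{2n−2} − 1)·d'·U^{n−2}. -/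
/-! Induction on `n ≥ 2`: writing `Uⁿ⁺¹V = U·(UⁿV)` and pushing the new `U` rightwards through `V`,
`c` and `d'` with the three relations raises every power of `U` by one, and the coefficients of
`c` and `d'` pick up exactly the factors that turn `q^{2n}` into `q^{2n+2}`. -/

section QCommutation

variable {A : Type*} [Ring A] [Algebra ℂ A] {q : ℂ} {U V c d : A}

theorem pow_add_two_mul_of_q_commutation (hq : q ≠ 0)
    (hUV : U * V = V * U + (q - q⁻¹) • c)
    (hUc : U * c = q ^ 2 • (c * U) + (q * (q ^ 2 - (q ^ 2)⁻¹)) • d)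
    (hUd : U * d = q ^ 4 • (d * U)) (m : ℕ) :
    U ^ (m + 2) * V = V * U ^ (m + 2) + (q⁻¹ * (q ^ (2 * m + 4) - 1)) • (c * U ^ (m + 1))
      + ((q ^ 2)⁻¹ * (q ^ (2 * m + 4) - 1) * (q ^ (2 * m + 2) - 1)) • (d * U ^ m) := by
  induction m with
  | zero =>
    rw [pow_two, mul_assoc, hUV, mul_add, ← mul_assoc, hUV, mul_smul_comm, hUc]
    simp only [add_mul, smul_mul_assoc, smul_add, smul_smul, mul_assoc, zero_add, pow_one,
      pow_zero, mul_one]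
    match_scalars <;> field_simp
    ring
  | succ m ih =>
    rw [pow_succ', mul_assoc, ih]
    simp only [mul_add, mul_smul_comm, ← mul_assoc, hUV, hUc, hUd]
    simp only [add_mul, smul_mul_assoc, smul_add, smul_smul, mul_assoc, ← pow_succ']
    match_scalars <;> field_simp <;> ring

end QCommutation

theorem generalized_pentagon_core_nsl_mirror_general (A : Type*) [Ring A] [Algebra ℂ A]
    (q : ℂ) (hq : q ≠ 0)
    (U V c d' : A)
    (h1 : U * V - V * U = (q - q⁻¹) • c)
    (h2 : U * c = (q ^ (2 : ℤ)) • (c * U) + (q * (q ^ (2 : ℤ) - q ^ (-2 : ℤ))) • d')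
    (h3 : U * d' = (q ^ (4 : ℤ)) • (d' * U)) :
    ∀ n : ℕ, 2 ≤ n →
      U ^ n * V = V * U ^ n + (q⁻¹ * (q ^ (2 * (n : ℤ)) - 1)) • (c * U ^ (n - 1)) +
        (q ^ (-2 : ℤ) * (q ^ (2 * (n : ℤ)) - 1) * (q ^ (2 * (n : ℤ) - 2) - 1)) •
          (d' * U ^ (n - 2)) := by
  intro n hn
  obtain ⟨m, rfl⟩ := Nat.exists_eq_add_of_le' hn
  simp only [zpow_neg, zpow_ofNat] at h2 h3 ⊢
  have hpow4 : q ^ (2 * ((m + 2 : ℕ) : ℤ)) = q ^ (2 * m + 4) := by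
    rw [← zpow_natCast]; push_cast; ring_nf
  have hpow2 : q ^ (2 * ((m + 2 : ℕ) : ℤ) - 2) = q ^ (2 * m + 2) := by
    rw [← zpow_natCast]; push_cast; ring_nf
  rw [hpow4, hpow2, Nat.add_sub_cancel, show m + 2 - 1 = m + 1 by omega]
  exact pow_add_two_mul_of_q_commutation hq (sub_eq_iff_eq_add'.mp h1) h2 h3 m

/-- Mirror form of the algebraic core of the non-simply-laced
generalized pentagon relation (Proposition 3.2): let `A` be a unital associative
ℂ-algebra, `q ∈ ℂ` invertible with `q² − q⁻² ≠ 0`, and `U, V, c, d' ∈ A` elements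
satisfying `UV − VU = (q − q⁻¹)·c`, `U·c = q²·c·U + q(q² − q⁻²)·d'`
(equivalently `d' = (q⁻¹Uc − qcU)/(q² − q⁻²)`), and `U·d' = q⁴·d'·U`.
Then for every integer `n ≥ 2`,
`Uⁿ·V = V·Uⁿ + q⁻¹(q^{2n} − 1)·c·U^{n−1} + q⁻²(q^{2n} − 1)(q^{2n−2} − 1)·d'·U^{n−2}`. -/
theorem generalized_pentagon_core_nsl_mirror (A : Type*) [Ring A] [Algebra ℂ A]
    (q : ℂ) (hq : q ≠ 0) (hq2 : q ^ (2 : ℤ) - q ^ (-2 : ℤ) ≠ 0)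
    (U V c d' : A)
    (h1 : U * V - V * U = (q - q⁻¹) • c)
    (h2 : U * c = (q ^ (2 : ℤ)) • (c * U) + (q * (q ^ (2 : ℤ) - q ^ (-2 : ℤ))) • d')
    (h3 : U * d' = (q ^ (4 : ℤ)) • (d' * U)) :
    ∀ n : ℕ, 2 ≤ n →
      U ^ n * V = V * U ^ n + (q⁻¹ * (q ^ (2 * (n : ℤ)) - 1)) • (c * U ^ (n - 1)) +
        (q ^ (-2 : ℤ) * (q ^ (2 * (n : ℤ)) - 1) * (q ^ (2 * (n : ℤ) - 2) - 1)) •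
          (d' * U ^ (n - 2)) :=
  generalized_pentagon_core_nsl_mirror_general A q hq U V c d' h1 h2 h3
end
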